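/- (Lumpability, m strategies) For every cluster index (A, x_1,…,x_m), every full state h ∈ A_{A,x_1,…,x_m}, and every cluster index (A', x'_1,…,x'_m): Σ_{h' ∈ A_{A',x'_1,…,x'_m}} m_{h,h'} = m''_{(A,x_1,…,x_m),(A',x'_1,…,x'_m)}. In particular, the sum of the full-chain transition probabilities from any state of a given cluster into a target cluster depends only on the two clusters and equals the corresponding entry of the reduced transition matrix M''. -/

import Mathlib

open Finset Matrix
open scoped Classical

noncomputable section

/-- A memory-1 strategy: an initial cooperation probability `init` and conditional
cooperation probabilities `cond A j`: the probability to cooperate in the next round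
when one's own action in the current round was `A` (`true` = cooperate) and exactly
`j` co-players cooperated. -/
structure Mem1 where
  init : ℝ
  cond : Bool → ℕ → ℝ

/-- All entries of the strategy lie in `[0,1]`. -/
def Mem1.valid (p : Mem1) : Prop :=
  p.init ∈ Set.Icc (0:ℝ) 1 ∧ ∀ A j, p.cond A j ∈ Set.Icc (0:ℝ) 1

/-- A full state: the action of each of the `n` players (`true` = cooperate). -/
abbrev FullState (n : ℕ) := Fin n → Bool

/-- The number of cooperators `σ(h)` in a full state. -/
def nCoop {n : ℕ} (h : FullState n) : ℕ :=
  (Finset.univ.filter fun i => h i = true).card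

/-- The full transition matrix `M` on the `2^n` full states, given each player's
memory-1 strategy: `m_{h,h'} = ∏ i u_i`, where `u_i` is player `i`'s probability of
choosing action `h' i` given that in state `h` his action was `h i` and
`σ(h) - f(h i)` of his co-players cooperated. -/
def fullM {n : ℕ} (strat : Fin n → Mem1) : Matrix (FullState n) (FullState n) ℝ :=
  Matrix.of fun h h' => ∏ i,
    (if h' i then (strat i).cond (h i) (nCoop h - if h i then 1 else 0)
     else 1 - (strat i).cond (h i) (nCoop h - if h i then 1 else 0))

/-- The initial full-state distribution `v(0)`: each player cooperates independently
with the initial probability of his own strategy, `v(0)_h = ∏ i |1 - f(A_i) - p^i_0|`. -/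
def fullInit {n : ℕ} (strat : Fin n → Mem1) : FullState n → ℝ :=
  fun h => ∏ i, |1 - (if h i then (1:ℝ) else 0) - (strat i).init|

/-- Binomial transfer factor: for a block of `tot` co-players of one strategy of which
`x` cooperated in the last round, the probability that exactly `x'` of them cooperate
in the next round, where previous cooperators cooperate with probability `pc` and
previous defectors with probability `pd`:
`Σ_{j=0}^{x'} C(x,j) pc^j (1-pc)^{x-j} C(tot-x, x'-j) pd^{x'-j} (1-pd)^{(tot-x)-(x'-j)}`. -/
def transfer (pc pd : ℝ) (x tot x' : ℕ) : ℝ :=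
  ∑ j ∈ Finset.range (x' + 1),
    (x.choose j : ℝ) * pc ^ j * (1 - pc) ^ (x - j) *
    ((tot - x).choose (x' - j) : ℝ) * pd ^ (x' - j) * (1 - pd) ^ ((tot - x) - (x' - j))

/-- The discounted mean distribution `(1-δ) Σ_{t=0}^∞ δ^t (w₀ T^t)`. -/
def discMean {α : Type*} [Fintype α] [DecidableEq α]
    (δ : ℝ) (w0 : α → ℝ) (T : Matrix α α ℝ) : α → ℝ :=
  fun j => (1 - δ) * ∑' t : ℕ, δ ^ t * (w0 ᵥ* T ^ t) j

/-- The focal player's one-round payoff in full state `h`: `a_{σ(h)-1}` if he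
cooperates, `b_{σ(h)}` if he defects. -/
def focalPayoff {n : ℕ} (focal : Fin n) (a b : ℕ → ℝ) (h : FullState n) : ℝ :=
  if h focal then a (nCoop h - 1) else b (nCoop h)

/-- Strategy assignment for `m` strategies: player `i` uses strategy `ps (assign i)`. -/
def stratM {n m : ℕ} (ps : Fin m → Mem1) (assign : Fin n → Fin m) : Fin n → Mem1 :=
  fun i => ps (assign i)

/-- The clustered state space for `m` strategies: the focal action together with, for
each strategy index `i`, the number `x i ∈ {0,…,k_i}` of cooperators among the `k_i`
co-players using strategy `i`. -/
abbrev RStateM {m : ℕ} (ks : Fin m → ℕ) := Bool × ((i : Fin m) → Fin (ks i + 1))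

/-- The cluster `A_{A,x_1,…,x_m}`: full states in which the focal player plays `A` and,
for every `i`, exactly `x i` of the co-players using strategy `i` cooperate. -/
def clusterM {n m : ℕ} (focal : Fin n) (assign : Fin n → Fin m) (ks : Fin m → ℕ)
    (A : Bool) (x : (i : Fin m) → Fin (ks i + 1)) : Finset (FullState n) :=
  Finset.univ.filter fun h =>
    h focal = A ∧
    ∀ i, (Finset.univ.filter fun j => j ≠ focal ∧ assign j = i ∧ h j = true).card = (x i : ℕ)

/-- The `m`-strategy reduced transition matrix `M''` on the `2 ∏ (k_i+1)` clustered
states, for a focal player using strategy `ps i0`. -/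
def redMM {m : ℕ} (ps : Fin m → Mem1) (ks : Fin m → ℕ) (i0 : Fin m) :
    Matrix (RStateM ks) (RStateM ks) ℝ :=
  Matrix.of fun s s' =>
    match s, s' with
    | (A, x), (A', x') =>
      |1 - (if A' then (1:ℝ) else 0) - (ps i0).cond A (∑ i, (x i : ℕ))| *
      ∏ i, transfer ((ps i).cond true ((∑ i', (x i' : ℕ)) + (if A then 1 else 0) - 1))
                    ((ps i).cond false ((∑ i', (x i' : ℕ)) + (if A then 1 else 0)))
                    (x i : ℕ) (ks i) (x' i : ℕ)

/-- The initial clustered distribution `ν(0)` for `m` strategies. -/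
def redInitM {m : ℕ} (ps : Fin m → Mem1) (ks : Fin m → ℕ) (i0 : Fin m) :
    RStateM ks → ℝ :=
  fun s => match s with
  | (A, x) =>
    |1 - (if A then (1:ℝ) else 0) - (ps i0).init| *
    ∏ i, (((ks i).choose (x i : ℕ) : ℝ) * (ps i).init ^ (x i : ℕ) *
          (1 - (ps i).init) ^ (ks i - (x i : ℕ)))

/-!
Players move independently, so `m_{h,h'}` is the focal player's factor times, for every strategy
`i`, a product over the co-players using `i`. For `h` in a cluster, `σ(h)` is determined by the
cluster, so each factor depends only on the player's own last action. States of a target cluster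
correspond to choices, for every `i`, of the `x'_i` cooperators among the `k_i` co-players of
strategy `i`; hence the sum of products is a product of sums. Splitting such a set of
cooperators into former cooperators and former defectors turns each sum into the binomial
convolution `transfer`.
-/

section PowersetCard

variable {α : Type*} [DecidableEq α]

theorem sum_powersetCard_prod_ite_eq {R : Type*} [CommRing R] (S : Finset α) (p : R) (j : ℕ) :
    ∑ T ∈ S.powersetCard j, ∏ a ∈ S, (if a ∈ T then p else 1 - p)
      = (#S).choose j * p ^ j * (1 - p) ^ (#S - j) := by
  have hconst : ∀ T ∈ S.powersetCard j,
      ∏ a ∈ S, (if a ∈ T then p else 1 - p) = p ^ j * (1 - p) ^ (#S - j) := by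
    intro T hT
    obtain ⟨hTS, hTcard⟩ := mem_powersetCard.mp hT
    rw [← prod_sdiff hTS, prod_ite_of_false (fun a ha => (mem_sdiff.mp ha).2),
      prod_ite_of_true (fun a ha => ha), prod_const, prod_const, card_sdiff_of_subset hTS,
      hTcard, mul_comm]
  rw [sum_congr rfl hconst, sum_const, card_powersetCard, nsmul_eq_mul, mul_assoc]

theorem sum_powersetCard_eq_sum_union {β : Type*} [AddCommMonoid β] {S B : Finset α}
    (hSB : S ⊆ B) (k : ℕ) (F : Finset α → β) :
    ∑ T ∈ B.powersetCard k, F T =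
      ∑ j ∈ range (k + 1), ∑ P ∈ S.powersetCard j ×ˢ (B \ S).powersetCard (k - j),
        F (P.1 ∪ P.2) := by
  have hsplit : ∀ T : Finset α, T ∩ S ∪ T \ S = T := fun T => by
    rw [union_comm, sdiff_union_inter]
  rw [sum_sigma']
  refine sum_nbij' (fun T => ⟨#(T ∩ S), (T ∩ S, T \ S)⟩) (fun P => P.2.1 ∪ P.2.2)
    ?_ ?_ ?_ ?_ ?_
  · intro T hT
    obtain ⟨hTB, hTcard⟩ := mem_powersetCard.mp hT
    have := card_inter_add_card_sdiff T S
    simp only [mem_sigma, mem_range, mem_product, mem_powersetCard, and_true]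
    exact ⟨by omega, inter_subset_right, sdiff_subset_sdiff hTB le_rfl, by omega⟩
  · rintro ⟨j, P, Q⟩ hPQ
    simp only [mem_sigma, mem_range, mem_product, mem_powersetCard] at hPQ ⊢
    obtain ⟨hj, ⟨hPS, hPcard⟩, hQB, hQcard⟩ := hPQ
    have hPQ : Disjoint P Q := (disjoint_of_subset_left hQB sdiff_disjoint).symm.mono_left hPS
    refine ⟨union_subset (hPS.trans hSB) (hQB.trans sdiff_subset), ?_⟩
    rw [card_union_of_disjoint hPQ]
    omega
  · intro T _
    rw [hsplit]
  · rintro ⟨j, P, Q⟩ hPQ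
    simp only [mem_sigma, mem_range, mem_product, mem_powersetCard] at hPQ
    obtain ⟨-, ⟨hPS, hPcard⟩, hQB, -⟩ := hPQ
    have hQS : Disjoint Q S := disjoint_of_subset_left hQB sdiff_disjoint
    have hinter : (P ∪ Q) ∩ S = P := by
      rw [union_inter_distrib_right, inter_eq_left.mpr hPS, disjoint_iff_inter_eq_empty.mp hQS,
        union_empty]
    have hsdiff : (P ∪ Q) \ S = Q := by
      rw [union_sdiff_distrib, sdiff_eq_empty_iff_subset.mpr hPS, empty_union, hQS.sdiff_eq_left]
    simp only [hinter, hsdiff, hPcard]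
  · intro T _
    rw [hsplit]

theorem sum_powersetCard_prod_eq_transfer (B : Finset α) (c : α → Bool) (r : Bool → ℝ)
    (k : ℕ) :
    ∑ T ∈ B.powersetCard k, ∏ a ∈ B, (if a ∈ T then r (c a) else 1 - r (c a))
      = transfer (r true) (r false) #{a ∈ B | c a} #B k := by
  set S := {a ∈ B | c a}
  have hSB : S ⊆ B := filter_subset _ _
  have hcS : ∀ a ∈ S, c a = true := fun a ha => (mem_filter.mp ha).2
  have hcS' : ∀ a ∈ B \ S, c a = false := fun a ha => by
    simpa [S, (mem_sdiff.mp ha).1] using (mem_sdiff.mp ha).2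
  rw [sum_powersetCard_eq_sum_union hSB, transfer, ← card_sdiff_of_subset hSB]
  refine sum_congr rfl fun j _ => ?_
  suffices hfactor : ∑ P ∈ S.powersetCard j ×ˢ (B \ S).powersetCard (k - j),
      ∏ a ∈ B, (if a ∈ P.1 ∪ P.2 then r (c a) else 1 - r (c a)) =
      (∑ P ∈ S.powersetCard j, ∏ a ∈ S, (if a ∈ P then r true else 1 - r true)) *
        ∑ Q ∈ (B \ S).powersetCard (k - j),
          ∏ a ∈ B \ S, (if a ∈ Q then r false else 1 - r false) by
    rw [hfactor, sum_powersetCard_prod_ite_eq, sum_powersetCard_prod_ite_eq]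
    ring
  rw [sum_mul_sum, ← sum_product']
  refine sum_congr rfl fun ⟨P, Q⟩ hPQ => ?_
  simp only [mem_product, mem_powersetCard] at hPQ
  obtain ⟨⟨hPS, -⟩, hQB, -⟩ := hPQ
  rw [← prod_sdiff hSB, mul_comm]
  congr 1
  · refine prod_congr rfl fun a ha => ?_
    have haQ : a ∉ Q := fun h => (mem_sdiff.mp (hQB h)).2 ha
    simp [hcS a ha, haQ]
  · refine prod_congr rfl fun a ha => ?_
    have haP : a ∉ P := fun h => (mem_sdiff.mp ha).2 (hPS h)
    simp [hcS' a ha, haP]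

end PowersetCard

theorem abs_one_sub_ite_sub {p : ℝ} (hp : p ∈ Set.Icc 0 1) (b : Bool) :
    |1 - (if b then 1 else 0) - p| = if b then p else 1 - p := by
  cases b <;> simp [abs_of_nonneg, hp.1, hp.2]

section Clusters

variable {n m : ℕ} (focal : Fin n) (assign : Fin n → Fin m)

def coPlayers (i : Fin m) : Finset (Fin n) :=
  {j | j ≠ focal ∧ assign j = i}

def ofCoopSets (A : Bool) (g : Fin m → Finset (Fin n)) : FullState n :=
  fun j => if j = focal then A else decide (j ∈ g (assign j))

@[to_additive]
theorem prod_eq_mul_prod_coPlayers {M : Type*} [CommMonoid M] (f : Fin n → M) :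
    ∏ j, f j = f focal * ∏ i, ∏ j ∈ coPlayers focal assign i, f j := by
  rw [← mul_prod_erase univ f (mem_univ focal), ← prod_fiberwise (univ.erase focal) assign f]
  congr! 3 with i
  ext j
  simp [coPlayers]

theorem mem_clusterM_iff (ks : Fin m → ℕ) (A : Bool) (x : (i : Fin m) → Fin (ks i + 1))
    (h : FullState n) :
    h ∈ clusterM focal assign ks A x ↔
      h focal = A ∧ ∀ i, #{j ∈ coPlayers focal assign i | h j} = x i := by
  simp only [clusterM, mem_filter, mem_univ, true_and, coPlayers, filter_filter, and_assoc]

theorem nCoop_eq_ite_add_sum (h : FullState n) :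
    nCoop h = (if h focal then 1 else 0) + ∑ i, #{j ∈ coPlayers focal assign i | h j} := by
  simp only [nCoop, card_filter]
  exact sum_eq_add_sum_coPlayers focal assign _

theorem filter_ofCoopSets (A : Bool) {g : Fin m → Finset (Fin n)} {i : Fin m}
    (hg : g i ⊆ coPlayers focal assign i) :
    {j ∈ coPlayers focal assign i | ofCoopSets focal assign A g j} = g i := by
  ext j
  constructor
  · intro hj
    obtain ⟨hjB, hjg⟩ := mem_filter.mp hj
    obtain ⟨hjf, rfl⟩ : j ≠ focal ∧ assign j = i := by simpa [coPlayers] using hjB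
    simpa [ofCoopSets, hjf] using hjg
  · intro hj
    obtain ⟨hjf, rfl⟩ : j ≠ focal ∧ assign j = i := by simpa [coPlayers] using hg hj
    simpa [ofCoopSets, hjf, coPlayers] using hj

theorem ofCoopSets_filter (h : FullState n) :
    ofCoopSets focal assign (h focal) (fun i => {j ∈ coPlayers focal assign i | h j}) = h := by
  funext j
  by_cases hj : j = focal
  · simp [ofCoopSets, hj]
  · simp [ofCoopSets, hj, coPlayers]

theorem sum_clusterM_eq_sum_piFinset {β : Type*} [AddCommMonoid β] (ks : Fin m → ℕ) (A : Bool)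
    (x : (i : Fin m) → Fin (ks i + 1)) (F : FullState n → β) :
    ∑ h ∈ clusterM focal assign ks A x, F h =
      ∑ g ∈ Fintype.piFinset (fun i => (coPlayers focal assign i).powersetCard (x i)),
        F (ofCoopSets focal assign A g) := by
  refine sum_nbij' (fun h i => {j ∈ coPlayers focal assign i | h j}) (ofCoopSets focal assign A)
    ?_ ?_ ?_ ?_ ?_
  · intro h hh
    rw [mem_clusterM_iff] at hh
    simp only [Fintype.mem_piFinset, mem_powersetCard]
    exact fun i => ⟨filter_subset _ _, hh.2 i⟩
  · intro g hg
    simp only [Fintype.mem_piFinset, mem_powersetCard] at hg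
    rw [mem_clusterM_iff]
    refine ⟨by simp [ofCoopSets], fun i => ?_⟩
    rw [filter_ofCoopSets focal assign A (hg i).1, (hg i).2]
  · intro h hh
    rw [← ((mem_clusterM_iff ..).mp hh).1]
    exact ofCoopSets_filter focal assign h
  · intro g hg
    simp only [Fintype.mem_piFinset, mem_powersetCard] at hg
    funext i
    exact filter_ofCoopSets focal assign A (hg i).1
  · intro h hh
    rw [← ((mem_clusterM_iff ..).mp hh).1, ofCoopSets_filter]

def coopProb (ps : Fin m → Mem1) (h : FullState n) (i : Fin m) (b : Bool) : ℝ :=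
  (ps i).cond b (nCoop h - if b then 1 else 0)

theorem fullM_stratM_ofCoopSets (ps : Fin m → Mem1) (h : FullState n) (A : Bool)
    (g : Fin m → Finset (Fin n)) :
    fullM (stratM ps assign) h (ofCoopSets focal assign A g) =
      (if A then coopProb ps h (assign focal) (h focal)
        else 1 - coopProb ps h (assign focal) (h focal)) *
      ∏ i, ∏ j ∈ coPlayers focal assign i,
        (if j ∈ g i then coopProb ps h i (h j) else 1 - coopProb ps h i (h j)) := by
  rw [fullM, of_apply, prod_eq_mul_prod_coPlayers focal assign]
  congr! 1
  · simp [ofCoopSets, coopProb, stratM]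
  · refine prod_congr rfl fun i _ => prod_congr rfl fun j hj => ?_
    obtain ⟨hjf, rfl⟩ : j ≠ focal ∧ assign j = i := by simpa [coPlayers] using hj
    simp [ofCoopSets, coopProb, stratM, hjf]

end Clusters

theorem lumpability_m_strategies_general (n m : ℕ)
    (ps : Fin m → Mem1) (hps : ∀ i, (ps i).valid)
    (ks : Fin m → ℕ) (i0 : Fin m)
    (focal : Fin n)
    (assign : Fin n → Fin m) (hassign : assign focal = i0)
    (hcard : ∀ i, (Finset.univ.filter fun j => j ≠ focal ∧ assign j = i).card = ks i) :
    ∀ (A : Bool) (x : (i : Fin m) → Fin (ks i + 1)),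
      ∀ h ∈ clusterM focal assign ks A x,
        ∀ (A' : Bool) (x' : (i : Fin m) → Fin (ks i + 1)),
          ∑ h' ∈ clusterM focal assign ks A' x', fullM (stratM ps assign) h h'
            = redMM ps ks i0 (A, x) (A', x') := by
  intro A x h hh A' x'
  obtain ⟨hfA, hx⟩ := (mem_clusterM_iff focal assign ks A x h).mp hh
  have hnc : nCoop h = ∑ i, (x i : ℕ) + if A then 1 else 0 := by
    rw [nCoop_eq_ite_add_sum focal assign h, hfA, add_comm]
    simp only [hx]
  rw [sum_clusterM_eq_sum_piFinset]
  simp only [fullM_stratM_ofCoopSets]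
  rw [← mul_sum, ← prod_univ_sum (f := fun i T => ∏ j ∈ coPlayers focal assign i,
    if j ∈ T then coopProb ps h i (h j) else 1 - coopProb ps h i (h j))]
  simp only [sum_powersetCard_prod_eq_transfer (coPlayers focal assign _) h]
  have hB : ∀ i, #(coPlayers focal assign i) = ks i := hcard
  rw [hfA, hassign]
  simp only [hx, hB, redMM, of_apply, coopProb, hnc, abs_one_sub_ite_sub ((hps i0).2 A _),
    add_tsub_cancel_right, if_true, Bool.false_eq_true, if_false, tsub_zero]

/-- **lumpability, `m` strategies.** From any full state of a cluster,
the total transition probability into a target cluster equals the corresponding entry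
of the `m`-strategy reduced transition matrix `M''`. -/
theorem lumpability_m_strategies (n m : ℕ) (hn : 2 ≤ n) (hm : 1 ≤ m)
    (ps : Fin m → Mem1) (hps : ∀ i, (ps i).valid)
    (ks : Fin m → ℕ) (hks : ∑ i, ks i = n - 1) (i0 : Fin m)
    (focal : Fin n) (hfocal : (focal : ℕ) = 0)
    (assign : Fin n → Fin m) (hassign : assign focal = i0)
    (hcard : ∀ i, (Finset.univ.filter fun j => j ≠ focal ∧ assign j = i).card = ks i) :
    ∀ (A : Bool) (x : (i : Fin m) → Fin (ks i + 1)),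
      ∀ h ∈ clusterM focal assign ks A x,
        ∀ (A' : Bool) (x' : (i : Fin m) → Fin (ks i + 1)),
          ∑ h' ∈ clusterM focal assign ks A' x', fullM (stratM ps assign) h h'
            = redMM ps ks i0 (A, x) (A', x') :=
  lumpability_m_strategies_general n m ps hps ks i0 focal assign hassign hcard
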